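/- Let G = G_1 ⊕_k G_2 be a k-edge sum of graphs G_1 and G_2, and let t > k. If G admits a weak immersion of K_t, then G_1 or G_2 admits a weak immersion of K_t. -/

import Mathlib

open Sym2

/-- A finite multigraph: finite vertex and edge types, each edge has an
unordered pair of endpoints, and there are no loops. -/
structure Multigraph where
  V : Type
  E : Type
  finV : Finite V
  finE : Finite E
  ends : E → Sym2 V
  no_loops : ∀ e, ¬ (ends e).IsDiag

attribute [instance] Multigraph.finV Multigraph.finE

namespace Multigraph

/-- `IsWalk G vs es`: `vs` is the vertex sequence and `es` the edge sequence of a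
walk in `G`. -/
inductive IsWalk (G : Multigraph) : List G.V → List G.E → Prop
  | nil (v : G.V) : IsWalk G [v] []
  | cons {v : G.V} {vs : List G.V} {es : List G.E} (u : G.V) (e : G.E)
      (he : G.ends e = s(u, v)) (hw : IsWalk G (v :: vs) es) :
      IsWalk G (u :: v :: vs) (e :: es)

/-- A path from `a` to `b` in the multigraph `G`, given by its vertex sequence `vs`
and edge sequence `es`. -/
def IsPathBetween (G : Multigraph) (a b : G.V) (vs : List G.V) (es : List G.E) : Prop :=
  G.IsWalk vs es ∧ vs.Nodup ∧ vs.head? = some a ∧ vs.getLast? = some b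

/-- A weak immersion of `H` into `G`. -/
structure WeakImmersion (H G : Multigraph) where
  vmap : H.V → G.V
  vmap_inj : Function.Injective vmap
  pverts : H.E → List G.V
  pedges : H.E → List G.E
  is_path : ∀ f : H.E, ∃ x y : H.V, H.ends f = s(x, y) ∧
    G.IsPathBetween (vmap x) (vmap y) (pverts f) (pedges f)
  edge_disjoint : ∀ f f' : H.E, f ≠ f' → ∀ e, e ∈ pedges f → e ∉ pedges f'

/-- `G.Immerses H`: `G` admits a weak immersion of `H`. -/
def Immerses (G H : Multigraph) : Prop := Nonempty (WeakImmersion H G)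

/-- The degree of a vertex: the number of edges incident with it. -/
noncomputable def degree (G : Multigraph) (v : G.V) : ℕ :=
  Nat.card {e : G.E // v ∈ G.ends e}

/-- The edge cut `δ(U)`: edges with exactly one endpoint in `U`. -/
def edgeCut (G : Multigraph) (U : Set G.V) : Set G.E :=
  {e | ∃ a b, G.ends e = s(a, b) ∧ a ∈ U ∧ b ∉ U}

/-- There exist `k` pairwise edge-disjoint paths from `a` to `b` in `G`. -/
def EdgeDisjointPaths (G : Multigraph) (a b : G.V) (k : ℕ) : Prop :=
  ∃ (vs : Fin k → List G.V) (es : Fin k → List G.E),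
    (∀ i, G.IsPathBetween a b (vs i) (es i)) ∧
    ∀ i j, i ≠ j → ∀ e, e ∈ es i → e ∉ es j

/-- Isomorphism of multigraphs. -/
structure Iso (G H : Multigraph) where
  vmap : G.V ≃ H.V
  emap : G.E ≃ H.E
  ends_map : ∀ e, H.ends (emap e) = Sym2.map vmap (G.ends e)

/-- The complete graph `K_t` as a multigraph. -/
def completeGraph (t : ℕ) : Multigraph where
  V := Fin t
  E := {p : Sym2 (Fin t) // ¬ p.IsDiag}
  finV := inferInstance
  finE := inferInstance
  ends := Subtype.val
  no_loops := fun e => e.prop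

/-- The multigraph `S_{k,n}`: vertices `x_1, …, x_n, y` (with `y = none`) and `k`
parallel edges from each `x_i` to `y`. -/
def star (k n : ℕ) : Multigraph where
  V := Option (Fin n)
  E := Fin n × Fin k
  finV := inferInstance
  finE := inferInstance
  ends := fun p => s(some p.1, none)
  no_loops := fun p => by simp [Sym2.mk_isDiag_iff]

/-! ### Edge sums -/

/-- A witness that `G` is a `k`-edge sum of `G₁` and `G₂`. -/
structure EdgeSumWitness (k : ℕ) (G G₁ G₂ : Multigraph) where
  v₁ : G₁.V
  v₂ : G₂.V
  deg₁ : G₁.degree v₁ = k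
  deg₂ : G₂.degree v₂ = k
  π : {e : G₁.E // v₁ ∈ G₁.ends e} ≃ {e : G₂.E // v₂ ∈ G₂.ends e}
  α : G.V ≃ {x : G₁.V // x ≠ v₁} ⊕ {y : G₂.V // y ≠ v₂}
  β : G.E ≃ ({e : G₁.E // v₁ ∉ G₁.ends e} ⊕ {e : G₂.E // v₂ ∉ G₂.ends e}) ⊕
      {e : G₁.E // v₁ ∈ G₁.ends e}
  ends₁ : ∀ (e : {e : G₁.E // v₁ ∉ G₁.ends e}) (x y : G₁.V) (hx : x ≠ v₁) (hy : y ≠ v₁),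
    G₁.ends e.val = s(x, y) →
      G.ends (β.symm (Sum.inl (Sum.inl e))) = s(α.symm (Sum.inl ⟨x, hx⟩), α.symm (Sum.inl ⟨y, hy⟩))
  ends₂ : ∀ (e : {e : G₂.E // v₂ ∉ G₂.ends e}) (x y : G₂.V) (hx : x ≠ v₂) (hy : y ≠ v₂),
    G₂.ends e.val = s(x, y) →
      G.ends (β.symm (Sum.inl (Sum.inr e))) = s(α.symm (Sum.inr ⟨x, hx⟩), α.symm (Sum.inr ⟨y, hy⟩))
  ends₃ : ∀ (e : {e : G₁.E // v₁ ∈ G₁.ends e}) (x : G₁.V) (y : G₂.V) (hx : x ≠ v₁) (hy : y ≠ v₂),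
    G₁.ends e.val = s(x, v₁) → G₂.ends (π e).val = s(y, v₂) →
      G.ends (β.symm (Sum.inr e)) = s(α.symm (Sum.inl ⟨x, hx⟩), α.symm (Sum.inr ⟨y, hy⟩))

/-- `G` is a `k`-edge sum of `G₁` and `G₂`. -/
def IsEdgeSum (k : ℕ) (G G₁ G₂ : Multigraph) : Prop :=
  Nonempty (EdgeSumWitness k G G₁ G₂)

/-- The edge sum is grounded. -/
def EdgeSumWitness.Grounded {k : ℕ} {G G₁ G₂ : Multigraph}
    (w : EdgeSumWitness k G G₁ G₂) : Prop :=
  (∃ v', v' ≠ w.v₁ ∧ G₁.EdgeDisjointPaths w.v₁ v' k) ∧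
  (∃ v', v' ≠ w.v₂ ∧ G₂.EdgeDisjointPaths w.v₂ v' k)

/-- `G` is a grounded `k`-edge sum of `G₁` and `G₂`. -/
def IsGroundedEdgeSum (k : ℕ) (G G₁ G₂ : Multigraph) : Prop :=
  ∃ w : EdgeSumWitness k G G₁ G₂, w.Grounded

/-! ### Auxiliary simple-graph operations -/

/-- Delete the vertex `t` from `T` (keeping it as an isolated vertex). -/
def delAt {τ : Type} (T : SimpleGraph τ) (t : τ) : SimpleGraph τ where
  Adj a b := T.Adj a b ∧ a ≠ t ∧ b ≠ t
  symm := ⟨fun a b h => ⟨h.1.symm, h.2.2, h.2.1⟩⟩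
  loopless := ⟨fun a h => T.loopless.irrefl a h.1⟩

lemma reach_delAt {τ : Type} (T : SimpleGraph τ) (t : τ) {a b : τ} (q : T.Walk a b)
    (ht : t ∉ q.support) : (delAt T t).Reachable a b := by
  induction q with
  | nil => exact SimpleGraph.Reachable.refl _
  | @cons u v w h p ih =>
      simp only [SimpleGraph.Walk.support_cons, List.mem_cons] at ht
      push_neg at ht
      have hv : v ≠ t := fun hv => ht.2 (hv ▸ p.start_mem_support)
      exact (SimpleGraph.Adj.reachable (G := delAt T t) (show T.Adj u v ∧ u ≠ t ∧ v ≠ t from ⟨h, Ne.symm ht.1, hv⟩)).trans (ih ht.2)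

/-! ### Tree-cut decompositions -/

/-- A tree-cut decomposition of the multigraph `G`. -/
structure TreeCutDecomp (G : Multigraph) where
  T : Type
  finT : Finite T
  tree : SimpleGraph T
  isTree : tree.IsTree
  bag : T → Set G.V
  disj : ∀ s t : T, s ≠ t → Disjoint (bag s) (bag t)
  covers : ∀ v : G.V, ∃ t : T, v ∈ bag t

attribute [instance] TreeCutDecomp.finT

variable {G : Multigraph}

/-- The union of the bags on the `v`-side of the tree edge `uv`. -/
def TreeCutDecomp.sideSet (D : TreeCutDecomp G) (u v : D.T) : Set G.V :=
  {x | ∃ s, (D.tree.deleteEdges {s(u, v)}).Reachable v s ∧ x ∈ D.bag s}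

/-- The adhesion of a tree-cut decomposition. -/
noncomputable def TreeCutDecomp.adhesion (D : TreeCutDecomp G) : ℕ :=
  sSup {n | ∃ u v : D.T, D.tree.Adj u v ∧ n = (G.edgeCut (D.sideSet u v)).ncard}

lemma TreeCutDecomp.exists_periph (D : TreeCutDecomp G) (t : D.T) (v : G.V)
    (hv : v ∉ D.bag t) :
    ∃ u : D.T, D.tree.Adj t u ∧ ∃ s, v ∈ D.bag s ∧ (delAt D.tree t).Reachable s u := by
  classical
  obtain ⟨s, hs⟩ := D.covers v
  have hst : t ≠ s := fun h => hv (h ▸ hs)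
  obtain ⟨w⟩ := D.isTree.isConnected.preconnected t s
  obtain ⟨x, hadj, q, hq⟩ := SimpleGraph.Walk.exists_eq_cons_of_ne hst w.toPath.val
  have hP : (SimpleGraph.Walk.cons hadj q).IsPath := hq ▸ w.toPath.prop
  rw [SimpleGraph.Walk.cons_isPath_iff] at hP
  exact ⟨x, hadj, s, hs, (reach_delAt D.tree t q hP.2).symm⟩

open Classical in
/-- The map from `G` to the vertices of the torso at `t`. -/
noncomputable def TreeCutDecomp.proj (D : TreeCutDecomp G) (t : D.T) (v : G.V) :
    ↥(D.bag t) ⊕ {u : D.T // D.tree.Adj t u} :=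
  if hv : v ∈ D.bag t then Sum.inl ⟨v, hv⟩
  else Sum.inr ⟨(D.exists_periph t v hv).choose, (D.exists_periph t v hv).choose_spec.1⟩

/-- The torso of `G` at a node `t` of a tree-cut decomposition. -/
noncomputable def TreeCutDecomp.torso (D : TreeCutDecomp G) (t : D.T) : Multigraph where
  V := ↥(D.bag t) ⊕ {u : D.T // D.tree.Adj t u}
  E := {e : G.E // ¬ (Sym2.map (D.proj t) (G.ends e)).IsDiag}
  finV := inferInstance
  finE := inferInstance
  ends := fun e => Sym2.map (D.proj t) (G.ends e.val)
  no_loops := fun e => e.prop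

/-- The core vertices of the torso at `t`. -/
def TreeCutDecomp.torsoCore (D : TreeCutDecomp G) (t : D.T) : Set (D.torso t).V :=
  Set.range Sum.inl

/-! ### The 3-center and tree-cut width -/

/-- Condition (1): the immersion of `H` in `G` covers `X` and every vertex of `H`
of degree at most two is mapped into `X`. -/
def CenterCond (G : Multigraph) (X : Set G.V) (H : Multigraph) (I : WeakImmersion H G) : Prop :=
  X ⊆ Set.range I.vmap ∧ ∀ x : H.V, H.degree x ≤ 2 → I.vmap x ∈ X

/-- `C` is a 3-center of `(G, X)`: it admits an immersion in `G` satisfying (1) and is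
maximal with respect to immersion containment among all such graphs. -/
def IsThreeCenter (G : Multigraph) (X : Set G.V) (C : Multigraph) : Prop :=
  (∃ I : WeakImmersion C G, CenterCond G X C I) ∧
  ∀ H : Multigraph, (∃ I : WeakImmersion H G, CenterCond G X H I) → C.Immerses H

/-- The number of vertices of the 3-center of `(G, X)`. -/
noncomputable def threeCenterCard (G : Multigraph) (X : Set G.V) : ℕ :=
  sSup {n | ∃ C : Multigraph, IsThreeCenter G X C ∧ Nat.card C.V = n}

/-- The width of a tree-cut decomposition. -/
noncomputable def TreeCutDecomp.width (D : TreeCutDecomp G) : ℕ :=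
  max D.adhesion (sSup {n | ∃ t : D.T, n = threeCenterCard (D.torso t) (D.torsoCore t)})

/-- The tree-cut width of a multigraph. -/
noncomputable def tcw (G : Multigraph) : ℕ :=
  sInf {w | ∃ D : TreeCutDecomp G, D.width = w}

/-! ### Tree decompositions and tree-width -/

/-- A tree decomposition of the multigraph `G`. -/
structure TreeDecomp (G : Multigraph) where
  T : Type
  finT : Finite T
  tree : SimpleGraph T
  isTree : tree.IsTree
  bag : T → Set G.V
  covers_v : ∀ v : G.V, ∃ t : T, v ∈ bag t
  covers_e : ∀ e : G.E, ∃ (t : T) (x y : G.V), G.ends e = s(x, y) ∧ x ∈ bag t ∧ y ∈ bag t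
  connected : ∀ v : G.V, (SimpleGraph.induce {t : T | v ∈ bag t} tree).Connected

/-- The tree-width of a multigraph. -/
noncomputable def treewidth (G : Multigraph) : ℕ :=
  sInf {n | ∃ D : TreeDecomp G, ∀ t : D.T, (D.bag t).ncard ≤ n + 1}

/-! ### Walls and grids -/

def wallStep (r : ℕ) (a b : Fin r × Fin r) : Prop :=
  (a.1 = b.1 ∧ a.2.val + 1 = b.2.val) ∨
  (a.2 = b.2 ∧ a.1.val + 1 = b.1.val ∧ (a.1.val + 1) % 2 = (a.2.val + 1) % 2)

def wallAdj (r : ℕ) (a b : Fin r × Fin r) : Prop := wallStep r a b ∨ wallStep r b a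

lemma wallStep_ne {r : ℕ} {a b : Fin r × Fin r} (h : wallStep r a b) : a ≠ b := by
  rintro rfl
  rcases h with ⟨-, h⟩ | ⟨-, h, -⟩ <;> omega

/-- The `r`-wall `H_r`. -/
def wall (r : ℕ) : Multigraph where
  V := Fin r × Fin r
  E := {q : Sym2 (Fin r × Fin r) // ∃ a b, q = s(a, b) ∧ wallAdj r a b}
  finV := inferInstance
  finE := inferInstance
  ends := Subtype.val
  no_loops := by
    rintro ⟨q, a, b, rfl, hab⟩ hd
    rw [Sym2.mk_isDiag_iff] at hd
    subst hd
    rcases hab with h | h <;> exact wallStep_ne h rfl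

def gridStep (r : ℕ) (a b : Fin r × Fin r) : Prop :=
  (a.1 = b.1 ∧ a.2.val + 1 = b.2.val) ∨ (a.2 = b.2 ∧ a.1.val + 1 = b.1.val)

def gridAdj (r : ℕ) (a b : Fin r × Fin r) : Prop := gridStep r a b ∨ gridStep r b a

lemma gridStep_ne {r : ℕ} {a b : Fin r × Fin r} (h : gridStep r a b) : a ≠ b := by
  rintro rfl
  rcases h with ⟨-, h⟩ | ⟨-, h⟩ <;> omega

/-- The `r × r` grid. -/
def grid (r : ℕ) : Multigraph where
  V := Fin r × Fin r
  E := {q : Sym2 (Fin r × Fin r) // ∃ a b, q = s(a, b) ∧ gridAdj r a b}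
  finV := inferInstance
  finE := inferInstance
  ends := Subtype.val
  no_loops := by
    rintro ⟨q, a, b, rfl, hab⟩ hd
    rw [Sym2.mk_isDiag_iff] at hd
    subst hd
    rcases hab with h | h <;> exact gridStep_ne h rfl

/-! ### Subdivisions and minors -/

/-- `G` contains `H` as a subdivision: an immersion whose composite paths pairwise
meet only in common endpoints. -/
def ContainsSubdivision (G H : Multigraph) : Prop :=
  ∃ I : WeakImmersion H G, ∀ f f' : H.E, f ≠ f' → ∀ v : G.V,
    v ∈ I.pverts f → v ∈ I.pverts f' →
      ((I.pverts f).head? = some v ∨ (I.pverts f).getLast? = some v) ∧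
      ((I.pverts f').head? = some v ∨ (I.pverts f').getLast? = some v)

/-- A set of vertices is connected in `G`. -/
def ConnectedIn (G : Multigraph) (B : Set G.V) : Prop :=
  B.Nonempty ∧ ∀ a ∈ B, ∀ b ∈ B, ∃ (vs : List G.V) (es : List G.E),
    G.IsWalk vs es ∧ vs.head? = some a ∧ vs.getLast? = some b ∧ ∀ v ∈ vs, v ∈ B

/-- `G` contains `H` as a minor. -/
def HasMinor (G H : Multigraph) : Prop :=
  ∃ B : H.V → Set G.V,
    (∀ x, G.ConnectedIn (B x)) ∧
    (∀ x y, x ≠ y → Disjoint (B x) (B y)) ∧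
    ∃ η : H.E → G.E, Function.Injective η ∧
      ∀ (f : H.E) (x y : H.V), H.ends f = s(x, y) →
        ∃ a b, G.ends (η f) = s(a, b) ∧ a ∈ B x ∧ b ∈ B y

/-! ### Subgraphs, splitting off, suppression -/

/-- `A` is (isomorphic to) a subgraph of `G`. -/
def IsSubgraph (A G : Multigraph) : Prop :=
  ∃ (fv : A.V → G.V) (fe : A.E → G.E), Function.Injective fv ∧ Function.Injective fe ∧
    ∀ e, G.ends (fe e) = Sym2.map fv (A.ends e)

/-- `B` is obtained from `A` by splitting off a pair of incident edges. -/
def SplitOffRel (A B : Multigraph) : Prop :=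
  ∃ (e₁ e₂ : A.E) (x y z : A.V), e₁ ≠ e₂ ∧ x ≠ z ∧
    A.ends e₁ = s(x, y) ∧ A.ends e₂ = s(y, z) ∧
    ∃ (fV : A.V ≃ B.V) (fE : {e : A.E // e ≠ e₁ ∧ e ≠ e₂} ⊕ Unit ≃ B.E),
      (∀ e : {e : A.E // e ≠ e₁ ∧ e ≠ e₂},
        B.ends (fE (Sum.inl e)) = Sym2.map fV (A.ends e.val)) ∧
      B.ends (fE (Sum.inr ())) = s(fV x, fV z)

/-- `B` is obtained from `A` by suppressing a vertex of degree two (contracting one of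
its incident edges and deleting any resulting loops). -/
def SuppressTwoRel (A B : Multigraph) : Prop :=
  ∃ v : A.V, A.degree v = 2 ∧
    ∃ σ : A.V → B.V,
      (∀ x y, x ≠ v → y ≠ v → (σ x = σ y ↔ x = y)) ∧
      (∀ y : B.V, ∃ x, x ≠ v ∧ σ x = y) ∧
      (∃ a, a ≠ v ∧ (∃ e, A.ends e = s(v, a)) ∧ σ v = σ a) ∧
      ∃ τ : {e : A.E // ¬ (Sym2.map σ (A.ends e)).IsDiag} ≃ B.E,
        ∀ e, B.ends (τ e) = Sym2.map σ (A.ends e.val)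

/-- A multigraph together with a marked set of vertices. -/
structure MarkedGraph where
  G : Multigraph
  X : Set G.V

/-- One step of suppressing a vertex outside the marked set of degree at most two
(for degree zero this deletes the vertex). -/
def SuppressStep (A B : MarkedGraph) : Prop :=
  ∃ v : A.G.V, v ∉ A.X ∧ A.G.degree v ≤ 2 ∧
    ∃ σ : A.G.V → B.G.V,
      (∀ x y, x ≠ v → y ≠ v → (σ x = σ y ↔ x = y)) ∧
      (∀ y : B.G.V, ∃ x, x ≠ v ∧ σ x = y) ∧
      B.X = {y | ∃ x, x ∈ A.X ∧ σ x = y} ∧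
      (1 ≤ A.G.degree v → ∃ a, a ≠ v ∧ (∃ e, A.G.ends e = s(v, a)) ∧ σ v = σ a) ∧
      ∃ τ : {e : A.G.E // ¬ (Sym2.map σ (A.G.ends e)).IsDiag} ≃ B.G.E,
        ∀ e, B.G.ends (τ e) = Sym2.map σ (A.G.ends e.val)

/-! ### Trees and cycles as multigraphs -/

/-- A multigraph is a tree if it corresponds to a simple tree on its vertex set. -/
def IsTreeGraph (G : Multigraph) : Prop :=
  ∃ S : SimpleGraph G.V, S.IsTree ∧ ∃ φ : G.E ≃ S.edgeSet, ∀ e, (φ e : Sym2 G.V) = G.ends e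

/-- The cycle on `n + 3` vertices. -/
def cycleGraph (n : ℕ) : Multigraph where
  V := Fin (n + 3)
  E := Fin (n + 3)
  finV := inferInstance
  finE := inferInstance
  ends := fun i => s(i, i + 1)
  no_loops := by
    intro i hd
    rw [Sym2.mk_isDiag_iff] at hd
    have h1 : (i : Fin (n + 3)) + 0 = i + 1 := by simpa using hd
    have h01 : (0 : Fin (n + 3)) = 1 := add_left_cancel h1
    have := congrArg Fin.val h01
    simp [Fin.val_one] at this

/-- A matching in a multigraph: a set of pairwise vertex-disjoint edges. -/
def IsMatching (G : Multigraph) (M : Set G.E) : Prop :=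
  ∀ e ∈ M, ∀ e' ∈ M, e ≠ e' → ∀ v : G.V, v ∈ G.ends e → v ∉ G.ends e'

end Multigraph

/-!
Let `A` be the `G₁`-side of the sum. The cut `δ(A)` consists of the `k` edges at `v₁`, and
every path of the immersion from a branch vertex in `A` to one outside `A` crosses it. The paths
being edge-disjoint, `a · b ≤ k < t = a + b` for the numbers `a`, `b` of branch vertices inside
and outside `A`, so one side, say the `G₂`-side, holds at most one branch vertex. Contracting the
`G₂`-side into `v₁` turns each path into a walk of `G₁` (edges inside `G₂` become loops and are
dropped), which shortens to a path; distinct edges of `G` not inside `G₂` stay distinct, so the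
paths remain edge-disjoint, and the branch vertices remain distinct.
-/

namespace Multigraph

variable {G H : Multigraph}

theorem exists_ends_eq (e : G.E) : ∃ x y, x ≠ y ∧ G.ends e = s(x, y) := by
  obtain ⟨⟨x, y⟩, hxy⟩ := Sym2.mk_surjective (G.ends e)
  refine ⟨x, y, ?_, hxy.symm⟩
  rintro rfl
  exact G.no_loops e (hxy ▸ Sym2.mk_isDiag_iff.2 rfl)

theorem exists_ends_eq_of_mem {e : G.E} {v : G.V} (hv : v ∈ G.ends e) :
    ∃ x, x ≠ v ∧ G.ends e = s(x, v) := by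
  obtain ⟨x, y, hxy, he⟩ := exists_ends_eq e
  rcases Sym2.mem_iff.1 (he ▸ hv) with rfl | rfl
  · exact ⟨y, hxy.symm, he.trans Sym2.eq_swap⟩
  · exact ⟨x, hxy, he⟩

theorem mem_edgeCut_iff_of_ends {U : Set G.V} {e : G.E} {u v : G.V} (h : G.ends e = s(u, v)) :
    e ∈ G.edgeCut U ↔ (u ∈ U ↔ v ∉ U) := by
  constructor
  · rintro ⟨a, b, hab, ha, hb⟩
    rcases Sym2.eq_iff.1 (hab.symm.trans h) with ⟨rfl, rfl⟩ | ⟨rfl, rfl⟩ <;> tauto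
  · intro huv
    by_cases hu : u ∈ U
    · exact ⟨u, v, h, hu, huv.1 hu⟩
    · exact ⟨v, u, h.trans Sym2.eq_swap, not_not.1 (mt huv.2 hu), hu⟩

theorem IsWalk.exists_mem_edgeCut {vs : List G.V} {es : List G.E} (hw : G.IsWalk vs es)
    (U : Set G.V) {a b : G.V} (ha : vs.head? = some a) (hb : vs.getLast? = some b)
    (hab : a ∈ U ↔ b ∉ U) : ∃ e ∈ es, e ∈ G.edgeCut U := by
  induction hw generalizing a with
  | nil v =>
    obtain rfl : v = a := by simpa using ha
    obtain rfl : v = b := by simpa using hb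
    tauto
  | @cons v vs es u e he hw ih =>
    obtain rfl : u = a := by simpa using ha
    by_cases hcut : u ∈ U ↔ v ∉ U
    · exact ⟨e, List.mem_cons_self, (mem_edgeCut_iff_of_ends he).2 hcut⟩
    · obtain ⟨e', he', hcut'⟩ := ih rfl (by simpa using hb) (by tauto)
      exact ⟨e', List.mem_cons_of_mem e he', hcut'⟩

theorem IsWalk.exists_suffix {vs : List G.V} {es : List G.E} (hw : G.IsWalk vs es)
    {u : G.V} (hu : u ∈ vs) : ∃ vs' es', G.IsWalk vs' es' ∧ vs'.head? = some u ∧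
      vs'.getLast? = vs.getLast? ∧ vs'.Sublist vs ∧ es'.Sublist es := by
  induction hw with
  | nil v =>
    obtain rfl : u = v := List.mem_singleton.1 hu
    exact ⟨[u], [], .nil u, rfl, rfl, .refl _, .refl _⟩
  | @cons v vs es x e he hw ih =>
    by_cases hux : u = x
    · subst hux
      exact ⟨_, _, .cons u e he hw, rfl, rfl, .refl _, .refl _⟩
    · obtain ⟨vs', es', hw', hh, hl, hvs, hes⟩ := ih (List.mem_of_ne_of_mem hux hu)
      exact ⟨vs', es', hw', hh, hl.trans List.getLast?_cons_cons.symm, hvs.cons x, hes.cons e⟩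

theorem IsWalk.exists_isPathBetween {vs : List G.V} {es : List G.E} (hw : G.IsWalk vs es)
    {a b : G.V} (ha : vs.head? = some a) (hb : vs.getLast? = some b) :
    ∃ vs' es', G.IsPathBetween a b vs' es' ∧ es' ⊆ es := by
  induction hw generalizing a with
  | nil v =>
    obtain rfl : v = a := by simpa using ha
    obtain rfl : v = b := by simpa using hb
    exact ⟨[v], [], ⟨.nil v, List.nodup_singleton v, rfl, rfl⟩, List.nil_subset _⟩
  | @cons v vs es u e he hw ih =>
    obtain rfl : u = a := by simpa using ha
    obtain ⟨vs', es', ⟨hw', hnd, hh, hl⟩, hes⟩ := ih rfl (by simpa using hb)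
    by_cases hu : u ∈ vs'
    · -- the path already passes through `u`: cut off the cycle
      obtain ⟨vs'', es'', hw'', hh', hl', hvs, hes'⟩ := hw'.exists_suffix hu
      exact ⟨vs'', es'', ⟨hw'', hnd.sublist hvs, hh', hl'.trans hl⟩,
        fun x hx => List.mem_cons_of_mem e (hes (hes'.subset hx))⟩
    · obtain ⟨rest, rfl⟩ := List.head?_eq_some_iff.1 hh
      exact ⟨u :: v :: rest, e :: es', ⟨.cons u e he hw', List.nodup_cons.2 ⟨hu, hnd⟩, rfl,
        List.getLast?_cons_cons.trans hl⟩, List.cons_subset_cons e hes⟩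

/-- A vertex map `G → H` that may identify the two ends of an edge; such edges are dropped,
every other edge goes to an edge of `H` with the image ends, no two to the same one. -/
structure ContractingMap (G H : Multigraph) where
  vmap : G.V → H.V
  emap : G.E → Option H.E
  emap_inj : ∀ {e e' : G.E} {x : H.E}, x ∈ emap e → x ∈ emap e' → e = e'
  ends_emap : ∀ e, ¬ (Sym2.map vmap (G.ends e)).IsDiag →
    ∃ x ∈ emap e, H.ends x = Sym2.map vmap (G.ends e)

namespace ContractingMap

variable (φ : ContractingMap G H)

theorem exists_isWalk_map {vs : List G.V} {es : List G.E} (hw : G.IsWalk vs es) :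
    ∃ vs' es', H.IsWalk vs' es' ∧ vs'.head? = vs.head?.map φ.vmap ∧
      vs'.getLast? = vs.getLast?.map φ.vmap ∧ ∀ x ∈ es', ∃ e ∈ es, x ∈ φ.emap e := by
  induction hw with
  | nil v => exact ⟨[φ.vmap v], [], .nil _, rfl, rfl, by simp⟩
  | @cons v vs es u e he hw ih =>
    obtain ⟨vs', es', hw', hh, hl, hes⟩ := ih
    have hl' : vs'.getLast? = (u :: v :: vs).getLast?.map φ.vmap := by
      rw [hl, List.getLast?_cons_cons]
    have hes' : ∀ x ∈ es', ∃ b ∈ e :: es, x ∈ φ.emap b := fun x hx =>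
      (hes x hx).imp fun b ⟨hb, hxb⟩ => ⟨List.mem_cons_of_mem e hb, hxb⟩
    by_cases huv : φ.vmap u = φ.vmap v
    · exact ⟨vs', es', hw', by simpa [huv] using hh, hl', hes'⟩
    · obtain ⟨x, hx, hxe⟩ := φ.ends_emap e (by simpa [he] using huv)
      obtain ⟨rest, rfl⟩ := List.head?_eq_some_iff.1 (hh.trans (Option.map_some ..))
      refine ⟨φ.vmap u :: φ.vmap v :: rest, x :: es', .cons _ x (by simpa [he] using hxe) hw',
        rfl, by simpa using hl', ?_⟩
      intro y hy
      rcases List.mem_cons.1 hy with rfl | hy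
      · exact ⟨e, List.mem_cons_self, hx⟩
      · exact hes' y hy

theorem exists_isPathBetween {a b : G.V} {vs : List G.V} {es : List G.E}
    (hp : G.IsPathBetween a b vs es) :
    ∃ vs' es', H.IsPathBetween (φ.vmap a) (φ.vmap b) vs' es' ∧
      ∀ x ∈ es', ∃ e ∈ es, x ∈ φ.emap e := by
  obtain ⟨vs', es', hw, hh, hl, hes⟩ := φ.exists_isWalk_map hp.1
  obtain ⟨vs'', es'', hpath, hsub⟩ :=
    hw.exists_isPathBetween (by rw [hh, hp.2.2.1, Option.map_some])
      (by rw [hl, hp.2.2.2, Option.map_some])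
  exact ⟨vs'', es'', hpath, fun x hx => hes x (hsub hx)⟩

theorem immerses {K : Multigraph} (I : WeakImmersion K G)
    (hinj : Function.Injective (φ.vmap ∘ I.vmap)) : H.Immerses K := by
  choose x y hxy hpath using I.is_path
  choose vs es hpath' hes using fun f => φ.exists_isPathBetween (hpath f)
  refine ⟨⟨φ.vmap ∘ I.vmap, hinj, vs, es, fun f => ⟨x f, y f, hxy f, hpath' f⟩, ?_⟩⟩
  intro f f' hff' e hef hef'
  obtain ⟨b, hb, heb⟩ := hes f e hef
  obtain ⟨b', hb', heb'⟩ := hes f' e hef'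
  exact I.edge_disjoint f f' hff' b hb (φ.emap_inj heb heb' ▸ hb')

end ContractingMap

theorem card_mul_card_le_ncard_edgeCut {t : ℕ} (I : WeakImmersion (completeGraph t) G)
    (U : Set G.V) :
    Nat.card {i // I.vmap i ∈ U} * Nat.card {i // I.vmap i ∉ U} ≤ (G.edgeCut U).ncard := by
  have hcross : ∀ q : {i // I.vmap i ∈ U} × {i // I.vmap i ∉ U},
      ∃ (f : (completeGraph t).E) (e : G.E), f.val = s(q.1.val, q.2.val) ∧
        e ∈ I.pedges f ∧ e ∈ G.edgeCut U := by
    rintro ⟨⟨i, hi⟩, ⟨j, hj⟩⟩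
    have hij : i ≠ j := by rintro rfl; exact hj hi
    let f : (completeGraph t).E := ⟨s(i, j), Sym2.mk_isDiag_iff.not.2 hij⟩
    obtain ⟨x, y, hxy, hp⟩ := I.is_path f
    have hends : I.vmap x ∈ U ↔ I.vmap y ∉ U := by
      rcases Sym2.eq_iff.1 (hxy : s(i, j) = s(x, y)) with ⟨rfl, rfl⟩ | ⟨rfl, rfl⟩ <;> tauto
    obtain ⟨e, he, hcut⟩ := hp.1.exists_mem_edgeCut U hp.2.2.1 hp.2.2.2 hends
    exact ⟨f, e, rfl, he, hcut⟩
  choose f e hf he hcut using hcross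
  have hinj : Function.Injective fun q => (⟨e q, hcut q⟩ : G.edgeCut U) := by
    intro q q' hqq'
    have hee' : e q = e q' := congrArg Subtype.val hqq'
    have hff' : f q = f q' := by
      by_contra hne
      exact I.edge_disjoint _ _ hne (e q) (he q) (hee' ▸ he q')
    rcases Sym2.eq_iff.1 ((hf q).symm.trans ((congrArg Subtype.val hff').trans (hf q'))) with
      ⟨h₁, h₂⟩ | ⟨h₁, -⟩
    · exact Prod.ext (Subtype.ext h₁) (Subtype.ext h₂)
    · exact absurd (h₁ ▸ q.1.2) q'.2.2
  rw [← Nat.card_prod, ← Nat.card_coe_set_eq]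
  exact Nat.card_le_card_of_injective _ hinj

namespace EdgeSumWitness

variable {k : ℕ} {G₁ G₂ : Multigraph} (w : EdgeSumWitness k G G₁ G₂)

def side₁ : Set G.V := {v | (w.α v).isLeft}

@[simp] theorem α_symm_inl_mem_side₁ (x : {x : G₁.V // x ≠ w.v₁}) :
    w.α.symm (.inl x) ∈ w.side₁ := by
  simp [side₁]

@[simp] theorem α_symm_inr_notMem_side₁ (y : {y : G₂.V // y ≠ w.v₂}) :
    w.α.symm (.inr y) ∉ w.side₁ := by
  simp [side₁]

theorem exists_ends_inl_inl (e : {e : G₁.E // w.v₁ ∉ G₁.ends e}) :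
    ∃ x y : {x : G₁.V // x ≠ w.v₁}, G₁.ends e.val = s(x.val, y.val) ∧
      G.ends (w.β.symm (.inl (.inl e))) = s(w.α.symm (.inl x), w.α.symm (.inl y)) := by
  obtain ⟨x, y, -, hxy⟩ := exists_ends_eq e.val
  have hx : x ≠ w.v₁ := by rintro rfl; exact e.2 (hxy ▸ Sym2.mem_mk_left _ _)
  have hy : y ≠ w.v₁ := by rintro rfl; exact e.2 (hxy ▸ Sym2.mem_mk_right _ _)
  exact ⟨⟨x, hx⟩, ⟨y, hy⟩, hxy, w.ends₁ e x y hx hy hxy⟩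

theorem exists_ends_inl_inr (e : {e : G₂.E // w.v₂ ∉ G₂.ends e}) :
    ∃ x y : {y : G₂.V // y ≠ w.v₂},
      G.ends (w.β.symm (.inl (.inr e))) = s(w.α.symm (.inr x), w.α.symm (.inr y)) := by
  obtain ⟨x, y, -, hxy⟩ := exists_ends_eq e.val
  have hx : x ≠ w.v₂ := by rintro rfl; exact e.2 (hxy ▸ Sym2.mem_mk_left _ _)
  have hy : y ≠ w.v₂ := by rintro rfl; exact e.2 (hxy ▸ Sym2.mem_mk_right _ _)
  exact ⟨⟨x, hx⟩, ⟨y, hy⟩, w.ends₂ e x y hx hy hxy⟩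

theorem exists_ends_inr (e : {e : G₁.E // w.v₁ ∈ G₁.ends e}) :
    ∃ (x : {x : G₁.V // x ≠ w.v₁}) (y : {y : G₂.V // y ≠ w.v₂}),
      G₁.ends e.val = s(x.val, w.v₁) ∧
      G.ends (w.β.symm (.inr e)) = s(w.α.symm (.inl x), w.α.symm (.inr y)) := by
  obtain ⟨x, hx, hxe⟩ := exists_ends_eq_of_mem e.2
  obtain ⟨y, hy, hye⟩ := exists_ends_eq_of_mem (w.π e).2
  exact ⟨⟨x, hx⟩, ⟨y, hy⟩, hxe, w.ends₃ e x y hx hy hxe hye⟩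

theorem edgeCut_side₁_subset_range : G.edgeCut w.side₁ ⊆ Set.range (w.β.symm ∘ .inr) := by
  intro e he
  obtain ⟨b, rfl⟩ := w.β.symm.surjective e
  rcases b with (e₁ | e₂) | e₁
  · obtain ⟨x, y, -, hxy⟩ := w.exists_ends_inl_inl e₁
    simp [mem_edgeCut_iff_of_ends hxy] at he
  · obtain ⟨x, y, hxy⟩ := w.exists_ends_inl_inr e₂
    simp [mem_edgeCut_iff_of_ends hxy] at he
  · exact ⟨e₁, rfl⟩

theorem ncard_edgeCut_side₁_le : (G.edgeCut w.side₁).ncard ≤ k := by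
  calc (G.edgeCut w.side₁).ncard
      ≤ (Set.range (w.β.symm ∘ .inr)).ncard := Set.ncard_le_ncard w.edgeCut_side₁_subset_range
    _ ≤ Nat.card {e : G₁.E // w.v₁ ∈ G₁.ends e} := Finite.card_range_le _
    _ = k := w.deg₁

theorem card_notMem_side₁_le_one_or_card_mem_side₁_le_one {t : ℕ} (hkt : k < t)
    (I : WeakImmersion (completeGraph t) G) :
    Nat.card {i // I.vmap i ∉ w.side₁} ≤ 1 ∨ Nat.card {i // I.vmap i ∈ w.side₁} ≤ 1 := by
  classical
  have hmul := (card_mul_card_le_ncard_edgeCut I w.side₁).trans w.ncard_edgeCut_side₁_le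
  have hadd : Nat.card {i // I.vmap i ∈ w.side₁} + Nat.card {i // I.vmap i ∉ w.side₁} = t := by
    rw [← Nat.card_sum, Nat.card_congr (Equiv.sumCompl _)]
    exact Nat.card_fin t
  by_contra! h
  nlinarith

def contractToLeft : ContractingMap G G₁ where
  vmap v := Sum.elim Subtype.val (fun _ => w.v₁) (w.α v)
  emap e := Sum.elim (Sum.elim (fun e₁ => some e₁.val) fun _ => none) (fun e₁ => some e₁.val)
    (w.β e)
  emap_inj := by
    intro e e' x he he'
    obtain ⟨b, rfl⟩ := w.β.symm.surjective e
    obtain ⟨b', rfl⟩ := w.β.symm.surjective e'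
    rcases b with (e₁ | e₂) | e₁ <;> rcases b' with (e₁' | e₂') | e₁' <;>
      simp only [Equiv.apply_symm_apply, Sum.elim_inl, Sum.elim_inr, Option.mem_def,
        Option.some.injEq, reduceCtorEq] at he he' <;> subst he
    all_goals first
      | rw [Subtype.ext he']
      | exact absurd (he' ▸ e₁'.2) e₁.2
      | exact absurd e₁.2 (he' ▸ e₁'.2)
  ends_emap := by
    intro e hdiag
    obtain ⟨b, rfl⟩ := w.β.symm.surjective e
    rcases b with (e₁ | e₂) | e₁
    · obtain ⟨x, y, hxy, he⟩ := w.exists_ends_inl_inl e₁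
      exact ⟨e₁.val, by simp, by simp [hxy, he]⟩
    · obtain ⟨x, y, he⟩ := w.exists_ends_inl_inr e₂
      simp [he] at hdiag
    · obtain ⟨x, y, hxe, he⟩ := w.exists_ends_inr e₁
      exact ⟨e₁.val, by simp, by simp [hxe, he]⟩

theorem immerses_left {K : Multigraph} (I : WeakImmersion K G)
    (h : Nat.card {x // I.vmap x ∉ w.side₁} ≤ 1) : G₁.Immerses K := by
  have hsub := Finite.card_le_one_iff_subsingleton.1 h
  refine w.contractToLeft.immerses I fun i j hij => ?_
  simp only [Function.comp_apply, contractToLeft] at hij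
  rcases hi : w.α (I.vmap i) with x | y <;> rcases hj : w.α (I.vmap j) with x' | y' <;>
    simp only [hi, hj, Sum.elim_inl, Sum.elim_inr] at hij
  · exact I.vmap_inj (w.α.injective (by rw [hi, hj, Subtype.ext hij]))
  · exact absurd hij x.2
  · exact absurd hij.symm x'.2
  · have hi' : I.vmap i ∉ w.side₁ := by simp [side₁, hi]
    have hj' : I.vmap j ∉ w.side₁ := by simp [side₁, hj]
    exact congrArg Subtype.val (Subsingleton.elim (⟨i, hi'⟩ : {x // I.vmap x ∉ w.side₁}) ⟨j, hj'⟩)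

def swap : EdgeSumWitness k G G₂ G₁ where
  v₁ := w.v₂
  v₂ := w.v₁
  deg₁ := w.deg₂
  deg₂ := w.deg₁
  π := w.π.symm
  α := w.α.trans (Equiv.sumComm _ _)
  β := w.β.trans (Equiv.sumCongr (Equiv.sumComm _ _) w.π)
  ends₁ e x y hx hy hxy := by
    simpa [Equiv.symm_trans_apply] using w.ends₂ e x y hx hy hxy
  ends₂ e x y hx hy hxy := by
    simpa [Equiv.symm_trans_apply] using w.ends₁ e x y hx hy hxy
  ends₃ e x y hx hy h₁ h₂ := by
    have h := w.ends₃ (w.π.symm e) y x hy hx h₂ (by rwa [Equiv.apply_symm_apply])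
    rw [Sym2.eq_swap] at h
    simpa [Equiv.symm_trans_apply] using h

theorem swap_side₁ : w.swap.side₁ = w.side₁ᶜ := by
  ext v
  change (Equiv.sumComm _ _ (w.α v)).isLeft ↔ ¬(w.α v).isLeft
  cases w.α v <;> simp

end EdgeSumWitness

end Multigraph

open Multigraph in
theorem summand_immerses_clique_of_edgeSum_general (k t : ℕ) (hkt : k < t)
    (G G₁ G₂ : Multigraph) (hsum : IsEdgeSum k G G₁ G₂)
    (h : G.Immerses (completeGraph t)) :
    G₁.Immerses (completeGraph t) ∨ G₂.Immerses (completeGraph t) := by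
  obtain ⟨w⟩ := hsum
  obtain ⟨I⟩ := h
  rcases w.card_notMem_side₁_le_one_or_card_mem_side₁_le_one hkt I with h₂ | h₁
  · exact Or.inl (w.immerses_left I h₂)
  · exact Or.inr (w.swap.immerses_left I (by simpa [w.swap_side₁] using h₁))

open Multigraph in
/-- an edge sum of order `k < t` immersing `K_t` implies one of the
summands immerses `K_t`. -/
theorem summand_immerses_clique_of_edgeSum (k t : ℕ) (hk : 1 ≤ k) (hkt : k < t)
    (G G₁ G₂ : Multigraph) (hsum : IsEdgeSum k G G₁ G₂)
    (h : G.Immerses (completeGraph t)) :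
    G₁.Immerses (completeGraph t) ∨ G₂.Immerses (completeGraph t) :=
  summand_immerses_clique_of_edgeSum_general k t hkt G G₁ G₂ hsum h
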